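/- For every dyadic rational a = d/2^k in (0,1) with d odd, there exists f in Thompson's group F with f(a) = 1/2 and word length ‖f‖_F ≤ C·k + C; moreover every f ∈ F with f(a) = 1/2 has ‖f‖_F ≥ k/C − C, for some constant C > 0 independent of a. -/

import Mathlib

/-- `r` is a dyadic rational. -/
def IsDyadic (r : ℝ) : Prop := ∃ (a : ℤ) (b : ℕ), r = a / 2 ^ b

/-- Membership in Thompson's group `F`: a piecewise-linear homeomorphism of `[0,1]`
(extended by the identity to `ℝ`) fixing `0` and `1`, with finitely many dyadic
breakpoints and slopes powers of `2`. -/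
def IsThompsonF (f : ℝ → ℝ) : Prop :=
  StrictMono f ∧ Continuous f ∧ (∀ x : ℝ, x ≤ 0 ∨ 1 ≤ x → f x = x) ∧
    ∃ B : Finset ℝ, (∀ b ∈ B, IsDyadic b) ∧
      ∀ x : ℝ, x ∉ B → ∃ m : ℤ, ∀ᶠ y in nhds x, f y = f x + (2 : ℝ) ^ m * (y - x)

/-- `w` is a word in the alphabet `S ∪ S⁻¹`. -/
def WordIn (S : Finset (ℝ → ℝ)) (w : List (ℝ → ℝ)) : Prop :=
  ∀ g ∈ w, g ∈ S ∨ ∃ h ∈ S, g ∘ h = id ∧ h ∘ g = id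

/-- The element (composition, applied right to left) represented by a word. -/
def wprod (w : List (ℝ → ℝ)) : ℝ → ℝ := w.foldr (· ∘ ·) id

def DyN (x : ℝ) (n : ℕ) : Prop := ∃ a : ℤ, x = (a : ℝ) / 2 ^ n

lemma dyn_mono {x : ℝ} {n m : ℕ} (h : DyN x n) (hnm : n ≤ m) : DyN x m := by
  obtain ⟨a, rfl⟩ := h
  obtain ⟨j, rfl⟩ := Nat.exists_eq_add_of_le hnm
  refine ⟨a * 2 ^ j, ?_⟩
  push_cast
  rw [pow_add]
  field_simp

lemma dyn_add {x y : ℝ} {n : ℕ} (hx : DyN x n) (hy : DyN y n) : DyN (x + y) n := by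
  obtain ⟨a, rfl⟩ := hx; obtain ⟨b, rfl⟩ := hy
  exact ⟨a + b, by push_cast; ring⟩

lemma dyn_neg {x : ℝ} {n : ℕ} (hx : DyN x n) : DyN (-x) n := by
  obtain ⟨a, rfl⟩ := hx; exact ⟨-a, by push_cast; ring⟩

lemma dyn_sub {x y : ℝ} {n : ℕ} (hx : DyN x n) (hy : DyN y n) : DyN (x - y) n := by
  simpa [sub_eq_add_neg] using dyn_add hx (dyn_neg hy)

lemma dyn_zpow {x : ℝ} {n : ℕ} (m : ℤ) (hx : DyN x n) :
    DyN ((2 : ℝ) ^ m * x) (n + m.natAbs) := by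
  obtain ⟨a, rfl⟩ := hx
  rcases le_or_gt 0 m with hm | hm
  · lift m to ℕ using hm
    have : ((2:ℝ) ^ (m:ℤ)) = 2 ^ m := by
      norm_cast
    rw [this]
    have : DyN ((2:ℝ) ^ m * (a / 2 ^ n)) n := ⟨a * 2 ^ m, by push_cast; ring⟩
    exact dyn_mono this (by omega)
  · obtain ⟨t, rfl⟩ : ∃ t : ℕ, m = -(t : ℤ) := ⟨m.natAbs, by omega⟩
    have h2 : ((2:ℝ) ^ (-(t:ℤ))) = ((2:ℝ) ^ t)⁻¹ := by
      rw [zpow_neg]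
      norm_cast
    refine ⟨a, ?_⟩
    rw [h2]
    have ht : ((-(t:ℤ)).natAbs) = t := by simp
    rw [ht, pow_add]
    field_simp

lemma dyn_int (a : ℤ) (n : ℕ) : DyN (a : ℝ) n :=
  ⟨a * 2 ^ n, by push_cast; field_simp⟩

lemma dyn_one (n : ℕ) : DyN (1 : ℝ) n := by simpa using dyn_int 1 n

lemma dyn_half : DyN (1 / 2 : ℝ) 1 := ⟨1, by norm_num⟩

lemma isDyadic_iff {x : ℝ} : IsDyadic x ↔ ∃ n, DyN x n := by
  constructor
  · rintro ⟨a, b, rfl⟩; exact ⟨b, a, rfl⟩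
  · rintro ⟨n, a, rfl⟩; exact ⟨a, n, rfl⟩

/-- exact exponent lower bound -/
lemma le_of_dyn_odd {d k m : ℕ} (hd : Odd d) (h : DyN ((d : ℝ) / 2 ^ k) m) : k ≤ m := by
  by_contra hkm
  push_neg at hkm
  obtain ⟨a, ha⟩ := h
  have h2 : ((d : ℝ)) * 2 ^ m = a * 2 ^ k := by
    field_simp at ha
    linarith [ha]
  have h3 : (d : ℤ) * 2 ^ m = a * 2 ^ k := by exact_mod_cast h2
  have h4 : (a * 2 ^ (k - m)) * 2 ^ m = (d:ℤ) * 2 ^ m := by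
    rw [h3, mul_assoc, ← pow_add]
    congr 2
    omega
  have h5 : (d : ℤ) = a * 2 ^ (k - m) :=
    (mul_right_cancel₀ (by positivity : ((2:ℤ) ^ m) ≠ 0) h4).symm
  have hdvd : (2 : ℤ) ∣ (d : ℤ) := by
    rw [h5]
    exact Dvd.dvd.mul_left (dvd_pow_self 2 (by omega : k - m ≠ 0)) a
  have hdvd' : (2 : ℕ) ∣ d := by exact_mod_cast hdvd
  obtain ⟨j, rfl⟩ := hd
  omega

lemma affine_eq_of_open {s c s' c' : ℝ} {W : Set ℝ} (hW : IsOpen W) (hne : W.Nonempty)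
    (h : ∀ y ∈ W, s * y + c = s' * y + c') : ∀ y : ℝ, s * y + c = s' * y + c' := by
  obtain ⟨u, hu⟩ := hne
  obtain ⟨ε, hε, hball⟩ := Metric.isOpen_iff.1 hW u hu
  have h1 := h u hu
  have h2 : s * (u + ε / 2) + c = s' * (u + ε / 2) + c' := by
    refine h _ (hball ?_)
    rw [Metric.mem_ball, Real.dist_eq, show u + ε / 2 - u = ε / 2 by ring,
      abs_of_pos (by linarith)]
    linarith
  intro y
  have hs : s = s' := by
    have : s * (ε / 2) = s' * (ε / 2) := by linarith
    have hε2 : ε / 2 ≠ 0 := by positivity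
    field_simp at this
    exact this
  subst hs
  have : c = c' := by linarith
  subst this
  ring

/-- A continuous function locally affine (with slopes powers of 2) on an open interval
is affine on the closed interval. -/
lemma affine_of_locally_affine {f : ℝ → ℝ} (hc : Continuous f) {p q : ℝ} (hpq : p < q)
    (h : ∀ x ∈ Set.Ioo p q, ∃ m : ℤ, ∀ᶠ y in nhds x, f y = f x + (2:ℝ) ^ m * (y - x)) :
    ∃ m : ℤ, ∀ x ∈ Set.Icc p q, f x = f p + (2:ℝ) ^ m * (x - p) := by
  set x₀ := (p + q) / 2 with hx₀def
  have hx₀ : x₀ ∈ Set.Ioo p q := ⟨by simp only [hx₀def]; linarith, by simp only [hx₀def]; linarith⟩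
  obtain ⟨m, hm⟩ := h x₀ hx₀
  set g : ℝ → ℝ := fun y => f x₀ + (2:ℝ) ^ m * (y - x₀) with hgdef
  have hgc : Continuous g := by fun_prop
  set U : Set ℝ := {x | ∀ᶠ y in nhds x, f y = g y} with hUdef
  have hUopen : IsOpen U := isOpen_setOf_eventually_nhds
  have hx₀U : x₀ ∈ U := hm
  -- key: points of Ioo in the closure of U are in U
  have key : ∀ x ∈ Set.Ioo p q, x ∈ closure U → x ∈ U := by
    intro x hx hcl
    obtain ⟨m', hm'⟩ := h x hx
    obtain ⟨V, hV, hVopen, hxV⟩ := eventually_nhds_iff.1 hm'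
    obtain ⟨u, huV, huU⟩ := (mem_closure_iff.1 hcl) V hVopen hxV
    obtain ⟨W, hW, hWopen, huW⟩ := eventually_nhds_iff.1 huU
    have hVW : ∀ y ∈ V ∩ W, (2:ℝ)^m' * y + (f x - 2^m' * x) = (2:ℝ)^m * y + (f x₀ - 2^m * x₀) := by
      intro y hy
      have h1 := hV y hy.1
      have h2 := hW y hy.2
      simp only [hgdef] at h2
      rw [h2] at h1
      linarith
    have hall := affine_eq_of_open (hVopen.inter hWopen) ⟨u, huV, huW⟩ hVW
    have : ∀ᶠ y in nhds x, f y = g y := by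
      filter_upwards [hm'] with y hy
      rw [hy, hgdef]
      have := hall y
      simp only
      linarith
    exact this
  -- clopen argument
  have hsub : Set.Ioo p q ⊆ U := by
    by_contra hns
    set V : Set ℝ := (closure U)ᶜ with hVdef
    have hVopen : IsOpen V := isOpen_compl_iff.2 isClosed_closure
    have hcover : Set.Ioo p q ⊆ U ∪ V := by
      intro x hx
      by_cases hcl : x ∈ closure U
      · exact Or.inl (key x hx hcl)
      · exact Or.inr hcl
    have hUne : (Set.Ioo p q ∩ U).Nonempty := ⟨x₀, hx₀, hx₀U⟩
    have hVne : (Set.Ioo p q ∩ V).Nonempty := by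
      rw [Set.not_subset] at hns
      obtain ⟨z, hz, hzU⟩ := hns
      refine ⟨z, hz, ?_⟩
      intro hzcl
      exact hzU (key z hz hzcl)
    obtain ⟨w, hw⟩ := isPreconnected_Ioo U V hUopen hVopen hcover hUne hVne
    exact hw.2.2 (subset_closure hw.2.1)
  have heq : Set.EqOn f g (Set.Icc p q) := by
    have h1 : Set.EqOn f g (Set.Ioo p q) := fun x hx => (hsub hx).self_of_nhds
    have := h1.closure hc hgc
    rwa [closure_Ioo (ne_of_lt hpq)] at this
  refine ⟨m, fun x hx => ?_⟩
  have hfp : f p = g p := heq ⟨le_refl p, le_of_lt hpq⟩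
  rw [heq hx, hfp, hgdef]
  simp only
  ring

lemma isDyadic_zero : IsDyadic 0 := ⟨0, 0, by norm_num⟩

lemma isDyadic_affine {x y z : ℝ} (m : ℤ) (hx : IsDyadic x) (hy : IsDyadic y)
    (hz : IsDyadic z) : IsDyadic (x + (2:ℝ) ^ m * (y - z)) := by
  obtain ⟨n1, h1⟩ := isDyadic_iff.1 hx
  obtain ⟨n2, h2⟩ := isDyadic_iff.1 hy
  obtain ⟨n3, h3⟩ := isDyadic_iff.1 hz
  set N := n1 + n2 + n3 with hN
  have hx' : DyN x N := dyn_mono h1 (by omega)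
  have hy' : DyN y N := dyn_mono h2 (by omega)
  have hz' : DyN z N := dyn_mono h3 (by omega)
  exact isDyadic_iff.2 ⟨N + m.natAbs,
    dyn_add (dyn_mono hx' (by omega)) (dyn_zpow m (dyn_sub hy' hz'))⟩

/-- Key quantitative lemma: a Thompson map increases dyadic complexity
by at most an additive constant. -/
lemma thompson_dyn_bound {f : ℝ → ℝ} (hf : IsThompsonF f) :
    ∃ c : ℕ, ∀ (n : ℕ) (x : ℝ), DyN x n → DyN (f x) (n + c) := by
  classical
  obtain ⟨hmono, hcont, hid, B, hBd, hloc⟩ := hf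
  set pts : Finset ℝ := insert (0:ℝ) (insert 1 (B.filter (fun b => 0 < b ∧ b < 1)))
    with hpts
  have h0 : (0:ℝ) ∈ pts := by simp [hpts]
  have h1 : (1:ℝ) ∈ pts := by simp [hpts]
  have hsub : ∀ t ∈ pts, 0 ≤ t ∧ t ≤ 1 := by
    intro t ht
    simp only [hpts, Finset.mem_insert, Finset.mem_filter] at ht
    rcases ht with rfl | rfl | ⟨_, ht1, ht2⟩
    · norm_num
    · norm_num
    · constructor <;> linarith
  have hdy : ∀ t ∈ pts, IsDyadic t := by
    intro t ht
    simp only [hpts, Finset.mem_insert, Finset.mem_filter] at ht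
    rcases ht with rfl | rfl | ⟨htB, _⟩
    · exact ⟨0, 0, by norm_num⟩
    · exact ⟨1, 0, by norm_num⟩
    · exact hBd t htB
  have hmemB : ∀ x : ℝ, x ∈ B → 0 < x → x < 1 → x ∈ pts := by
    intro x hxB hx0 hx1
    simp only [hpts, Finset.mem_insert, Finset.mem_filter]
    exact Or.inr (Or.inr ⟨hxB, hx0, hx1⟩)
  -- affineness on gaps
  have hIoo : ∀ p q : ℝ, p < q → 0 ≤ p → q ≤ 1 → (∀ t ∈ pts, t ∉ Set.Ioo p q) →
      ∃ m : ℤ, ∀ x ∈ Set.Icc p q, f x = f p + (2:ℝ) ^ m * (x - p) := by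
    intro p q hpq hp0 hq1 hnot
    apply affine_of_locally_affine hcont hpq
    intro x hx
    apply hloc
    intro hxB
    exact hnot x (hmemB x hxB (lt_of_le_of_lt hp0 hx.1) (lt_of_lt_of_le hx.2 hq1)) hx
  -- dyadicity of f at the break points
  have hf0 : f 0 = 0 := hid 0 (Or.inl le_rfl)
  have hfd : ∀ p ∈ pts, IsDyadic (f p) := by
    suffices H : ∀ N : ℕ, ∀ p ∈ pts, (pts.filter (fun t => t < p)).card ≤ N →
        IsDyadic (f p) by
      intro p hp; exact H _ p hp le_rfl
    intro N
    induction N with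
    | zero =>
      intro p hp hcard
      have hp0 : p = 0 := by
        by_contra hne
        have hpos : 0 < p := lt_of_le_of_ne (hsub p hp).1 (Ne.symm hne)
        have hmem : (0:ℝ) ∈ pts.filter (fun t => t < p) :=
          Finset.mem_filter.2 ⟨h0, hpos⟩
        have := Finset.card_pos.2 ⟨(0:ℝ), hmem⟩
        omega
      rw [hp0, hf0]; exact isDyadic_zero
    | succ N ih =>
      intro p hp hcard
      by_cases hp0 : p = 0
      · rw [hp0, hf0]; exact isDyadic_zero
      · have hppos : 0 < p := lt_of_le_of_ne (hsub p hp).1 (Ne.symm hp0)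
        set Fp := pts.filter (fun t => t < p) with hFp
        have hFpne : Fp.Nonempty := ⟨0, Finset.mem_filter.2 ⟨h0, hppos⟩⟩
        set p' := Fp.max' hFpne with hp'
        have hp'mem : p' ∈ Fp := Finset.max'_mem _ _
        have hp'pts : p' ∈ pts := (Finset.mem_filter.1 hp'mem).1
        have hp'lt : p' < p := (Finset.mem_filter.1 hp'mem).2
        have hnone : ∀ t ∈ pts, t ∉ Set.Ioo p' p := by
          rintro t ht ⟨h1t, h2t⟩
          have : t ∈ Fp := Finset.mem_filter.2 ⟨ht, h2t⟩
          exact absurd (Finset.le_max' _ t this) (not_le.2 h1t)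
        obtain ⟨m, hm⟩ := hIoo p' p hp'lt (hsub p' hp'pts).1 (hsub p hp).2 hnone
        have hfp' : IsDyadic (f p') := by
          apply ih p' hp'pts
          have hss : pts.filter (fun t => t < p') ⊆ Fp.erase p' := by
            intro t ht
            have ht' := Finset.mem_filter.1 ht
            exact Finset.mem_erase.2 ⟨ne_of_lt ht'.2,
              Finset.mem_filter.2 ⟨ht'.1, lt_trans ht'.2 hp'lt⟩⟩
          have h1' := Finset.card_le_card hss
          have h2' := Finset.card_erase_of_mem hp'mem
          have h3' := Finset.card_pos.2 hFpne
          omega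
        have heq := hm p ⟨le_of_lt hp'lt, le_rfl⟩
        rw [heq]
        exact isDyadic_affine m hfp' (hdy p hp) (hdy p' hp'pts)
  -- the "next point" function
  set qq : ℝ → ℝ := fun p =>
    if h : (pts.filter (fun t => p < t)).Nonempty then (pts.filter (fun t => p < t)).min' h
    else 2 with hqq
  have hqqspec : ∀ p ∈ pts, p < 1 → qq p ∈ pts ∧ p < qq p ∧ qq p ≤ 1 ∧
      (∀ t ∈ pts, t ∉ Set.Ioo p (qq p)) ∧ (∀ t ∈ pts, p < t → qq p ≤ t) := by
    intro p hppts hplt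
    have hne : (pts.filter (fun t => p < t)).Nonempty :=
      ⟨1, Finset.mem_filter.2 ⟨h1, hplt⟩⟩
    have hqqp : qq p = (pts.filter (fun t => p < t)).min' hne := by
      simp only [hqq, dif_pos hne]
    have hmem : qq p ∈ pts.filter (fun t => p < t) := by
      rw [hqqp]; exact Finset.min'_mem _ _
    have hqpts : qq p ∈ pts := (Finset.mem_filter.1 hmem).1
    have hlt : p < qq p := (Finset.mem_filter.1 hmem).2
    refine ⟨hqpts, hlt, (hsub _ hqpts).2, ?_, ?_⟩
    · rintro t ht ⟨h1t, h2t⟩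
      have : t ∈ pts.filter (fun t => p < t) := Finset.mem_filter.2 ⟨ht, h1t⟩
      have := Finset.min'_le _ t this
      rw [← hqqp] at this
      linarith
    · intro t ht hpt
      have : t ∈ pts.filter (fun t => p < t) := Finset.mem_filter.2 ⟨ht, hpt⟩
      have := Finset.min'_le _ t this
      rwa [← hqqp] at this
  -- per-piece constants
  have hpiece : ∀ p : ℝ, ∃ cp : ℕ, p ∈ pts → p < 1 → ∀ (n : ℕ) (x : ℝ),
      x ∈ Set.Icc p (qq p) → DyN x n → DyN (f x) (n + cp) := by
    intro p
    by_cases hp : p ∈ pts ∧ p < 1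
    · obtain ⟨hppts, hplt⟩ := hp
      obtain ⟨hqpts, hlt, hq1, hgap, _⟩ := hqqspec p hppts hplt
      obtain ⟨m, hm⟩ := hIoo p (qq p) hlt (hsub p hppts).1 hq1 hgap
      obtain ⟨e, he⟩ := isDyadic_iff.1 (hfd p hppts)
      obtain ⟨np, hnp⟩ := isDyadic_iff.1 (hdy p hppts)
      refine ⟨e + np + m.natAbs, fun _ _ n x hx hxn => ?_⟩
      rw [hm x hx]
      have hsubx : DyN (x - p) (n + np) :=
        dyn_sub (dyn_mono hxn (by omega)) (dyn_mono hnp (by omega))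
      have hmul : DyN ((2:ℝ) ^ m * (x - p)) (n + np + m.natAbs) := dyn_zpow m hsubx
      have : DyN (f p + (2:ℝ) ^ m * (x - p)) (n + np + m.natAbs + e) :=
        dyn_add (dyn_mono he (by omega)) (dyn_mono hmul (by omega))
      exact dyn_mono this (by omega)
    · exact ⟨0, fun h1 h2 => absurd ⟨h1, h2⟩ hp⟩
  set cfun : ℝ → ℕ := fun p => (hpiece p).choose with hcfun
  set c : ℕ := pts.sup cfun with hc
  refine ⟨c, fun n x hxn => ?_⟩
  rcases le_or_gt x 0 with hx0 | hx0
  · rw [hid x (Or.inl hx0)]; exact dyn_mono hxn (by omega)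
  rcases le_or_gt 1 x with hx1 | hx1
  · rw [hid x (Or.inr hx1)]; exact dyn_mono hxn (by omega)
  · have hne : (pts.filter (fun t => t ≤ x)).Nonempty :=
      ⟨0, Finset.mem_filter.2 ⟨h0, le_of_lt hx0⟩⟩
    set p := (pts.filter (fun t => t ≤ x)).max' hne with hp
    have hpmem : p ∈ pts.filter (fun t => t ≤ x) := Finset.max'_mem _ _
    have hppts : p ∈ pts := (Finset.mem_filter.1 hpmem).1
    have hple : p ≤ x := (Finset.mem_filter.1 hpmem).2
    have hplt : p < 1 := lt_of_le_of_lt hple hx1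
    obtain ⟨hqpts, hlt, hq1, hgap, hqmin⟩ := hqqspec p hppts hplt
    have hxle : x ≤ qq p := by
      by_contra hcon
      push_neg at hcon
      have : qq p ∈ pts.filter (fun t => t ≤ x) :=
        Finset.mem_filter.2 ⟨hqpts, le_of_lt hcon⟩
      have := Finset.le_max' _ _ this
      rw [← hp] at this
      linarith
    have hspec := (hpiece p).choose_spec hppts hplt n x ⟨hple, hxle⟩ hxn
    have hcf : (hpiece p).choose ≤ c := by
      have : cfun p ≤ c := Finset.le_sup hppts
      exact this
    exact dyn_mono hspec (by omega)

lemma thompson_dyadic {f : ℝ → ℝ} (hf : IsThompsonF f) {x : ℝ} (hx : IsDyadic x) :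
    IsDyadic (f x) := by
  obtain ⟨c, hc⟩ := thompson_dyn_bound hf
  obtain ⟨n, hn⟩ := isDyadic_iff.1 hx
  exact isDyadic_iff.2 ⟨n + c, hc n x hn⟩

lemma thompson_id : IsThompsonF id :=
  ⟨strictMono_id, continuous_id, fun _ _ => rfl, ∅, by simp, fun x _ =>
    ⟨0, by filter_upwards with y; simp⟩⟩

lemma thompson_surj {f : ℝ → ℝ} (hf : IsThompsonF f) : Function.Surjective f := by
  obtain ⟨hmono, hcont, hid, _⟩ := hf
  intro y
  rcases le_or_gt y 0 with hy | hy
  · exact ⟨y, hid y (Or.inl hy)⟩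
  rcases le_or_gt 1 y with hy1 | hy1
  · exact ⟨y, hid y (Or.inr hy1)⟩
  · have h0 : f 0 = 0 := hid 0 (Or.inl le_rfl)
    have h1 : f 1 = 1 := hid 1 (Or.inr le_rfl)
    have : y ∈ Set.Icc (f 0) (f 1) := by rw [h0, h1]; exact ⟨le_of_lt hy, le_of_lt hy1⟩
    obtain ⟨x, _, hx⟩ := intermediate_value_Icc (by norm_num : (0:ℝ) ≤ 1)
      (hcont.continuousOn) this
    exact ⟨x, hx⟩

/-- Thompson maps have Thompson inverses. -/
lemma thompson_inv {f : ℝ → ℝ} (hf : IsThompsonF f) :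
    ∃ g : ℝ → ℝ, IsThompsonF g ∧ (∀ x, g (f x) = x) ∧ (∀ y, f (g y) = y) := by
  classical
  obtain ⟨hmono, hcont, hid, B, hBd, hloc⟩ := hf
  have hf' : IsThompsonF f := ⟨hmono, hcont, hid, B, hBd, hloc⟩
  have hsurj : Function.Surjective f := thompson_surj hf'
  set e : ℝ ≃o ℝ := StrictMono.orderIsoOfSurjective f hmono hsurj with he
  have hef : ∀ x, e x = f x := fun x => rfl
  set g : ℝ → ℝ := fun y => e.symm y with hg
  have hgf : ∀ x, g (f x) = x := by
    intro x
    simp only [hg, ← hef]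
    exact e.symm_apply_apply x
  have hfg : ∀ y, f (g y) = y := by
    intro y
    have := e.apply_symm_apply y
    rw [hef] at this
    exact this
  have hgmono : StrictMono g := fun a b hab => e.symm.strictMono hab
  have hgcont : Continuous g := e.symm.continuous
  have hgid : ∀ y : ℝ, y ≤ 0 ∨ 1 ≤ y → g y = y := by
    intro y hy
    have : f y = y := hid y hy
    conv_lhs => rw [← this]
    exact hgf y
  refine ⟨g, ⟨hgmono, hgcont, hgid, (insert (0:ℝ) (insert 1 B)).image f, ?_, ?_⟩, hgf, hfg⟩
  · intro b hb
    obtain ⟨t, ht, rfl⟩ := Finset.mem_image.1 hb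
    simp only [Finset.mem_insert] at ht
    rcases ht with rfl | rfl | htB
    · rw [hid 0 (Or.inl le_rfl)]; exact ⟨0, 0, by norm_num⟩
    · rw [hid 1 (Or.inr le_rfl)]; exact ⟨1, 0, by norm_num⟩
    · exact thompson_dyadic hf' (hBd t htB)
  · intro y hy
    set x := g y with hx
    have hfx : f x = y := hfg y
    have hxB : x ∉ B := by
      intro hcon
      apply hy
      exact Finset.mem_image.2 ⟨x, by simp [Finset.mem_insert, hcon], hfx⟩
    obtain ⟨m, hm⟩ := hloc x hxB
    obtain ⟨V, hV, hVopen, hxV⟩ := eventually_nhds_iff.1 hm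
    refine ⟨-m, ?_⟩
    have hpre : IsOpen (g ⁻¹' V) := hVopen.preimage hgcont
    have hypre : y ∈ g ⁻¹' V := by simpa [Set.mem_preimage, ← hx] using hxV
    filter_upwards [hpre.mem_nhds hypre] with w hw
    have h1 : f (g w) = f x + (2:ℝ) ^ m * (g w - x) := hV (g w) hw
    rw [hfg w, hfx] at h1
    have h2 : (2:ℝ) ^ (-m) * (w - y) = (2:ℝ) ^ (-m) * ((2:ℝ) ^ m * (g w - x)) := by
      rw [show w - y = (2:ℝ) ^ m * (g w - x) by linarith]
    rw [← mul_assoc, ← zpow_add₀ (by norm_num : (2:ℝ) ≠ 0)] at h2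
    simp only [neg_add_cancel, zpow_zero, one_mul] at h2
    rw [h2]
    simp [hx]

/-- Thompson maps are closed under composition. -/
lemma thompson_comp {g h : ℝ → ℝ} (hg : IsThompsonF g) (hh : IsThompsonF h) :
    IsThompsonF (g ∘ h) := by
  classical
  obtain ⟨hi, hiT, hhi1, hhi2⟩ := thompson_inv hh
  obtain ⟨hgm, hgc, hgid, Bg, hBgd, hgloc⟩ := hg
  obtain ⟨hhm, hhc, hhid, Bh, hBhd, hhloc⟩ := hh
  have hh' : IsThompsonF h := ⟨hhm, hhc, hhid, Bh, hBhd, hhloc⟩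
  refine ⟨hgm.comp hhm, hgc.comp hhc, ?_, Bh ∪ Bg.image hi, ?_, ?_⟩
  · intro x hx
    simp only [Function.comp_apply]
    rw [hhid x hx, hgid x hx]
  · intro b hb
    rcases Finset.mem_union.1 hb with hb | hb
    · exact hBhd b hb
    · obtain ⟨t, ht, rfl⟩ := Finset.mem_image.1 hb
      exact thompson_dyadic hiT (hBgd t ht)
  · intro x hx
    have hxh : x ∉ Bh := fun hc => hx (Finset.mem_union.2 (Or.inl hc))
    have hhxg : h x ∉ Bg := by
      intro hc
      apply hx
      apply Finset.mem_union.2 (Or.inr _)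
      exact Finset.mem_image.2 ⟨h x, hc, hhi1 x⟩
    obtain ⟨m1, hm1⟩ := hhloc x hxh
    obtain ⟨m2, hm2⟩ := hgloc (h x) hhxg
    obtain ⟨V, hV, hVopen, hxV⟩ := eventually_nhds_iff.1 hm2
    refine ⟨m2 + m1, ?_⟩
    have hpre : IsOpen (h ⁻¹' V) := hVopen.preimage hhc
    have hypre : x ∈ h ⁻¹' V := hxV
    filter_upwards [hpre.mem_nhds hypre, hm1] with y hy hy1
    simp only [Function.comp_apply]
    rw [hV (h y) hy, hy1]
    rw [zpow_add₀ (by norm_num : (2:ℝ) ≠ 0)]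
    ring

noncomputable def mapA : ℝ → ℝ := fun x =>
  if x ≤ 0 then x else if x ≤ 1/2 then x/2 else if x ≤ 3/4 then x - 1/4
  else if x ≤ 1 then 2*x - 1 else x

noncomputable def mapA' : ℝ → ℝ := fun x =>
  if x ≤ 0 then x else if x ≤ 1/4 then 2*x else if x ≤ 1/2 then x + 1/4
  else if x ≤ 1 then x/2 + 1/2 else x

noncomputable def mapG : ℝ → ℝ := fun x =>
  if x ≤ 1/4 then x else if x ≤ 1/2 then 2*x - 1/4 else if x ≤ 1 then x/2 + 1/2 else x

noncomputable def mapH : ℝ → ℝ := fun x =>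
  if x ≤ 0 then x else if x ≤ 1/2 then x/2 else if x ≤ 3/4 then 2*x - 3/4 else x

lemma loc_aff (s c : ℝ) {f : ℝ → ℝ} {p q x : ℝ} (m : ℤ) (hs : (2:ℝ) ^ m = s)
    (hp : p < x) (hq : x < q) (h : ∀ y ∈ Set.Ioo p q, f y = s * y + c) :
    ∃ m : ℤ, ∀ᶠ y in nhds x, f y = f x + (2:ℝ) ^ m * (y - x) := by
  refine ⟨m, ?_⟩
  filter_upwards [Ioo_mem_nhds hp hq] with y hy
  rw [h y hy, h x ⟨hp, hq⟩, hs]; ring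

lemma two_zpow_neg_one : (2:ℝ) ^ (-1 : ℤ) = 1/2 := by
  rw [zpow_neg, zpow_one]; norm_num

lemma mapA_thompson : IsThompsonF mapA := by
  refine ⟨?_, ?_, ?_, ({0, 1/2, 3/4, 1} : Finset ℝ), ?_, ?_⟩
  · intro a b hab
    simp only [mapA]
    split_ifs <;> linarith
  · unfold mapA
    refine Continuous.if_le continuous_id ?_ continuous_id continuous_const
      (fun x hx => by subst hx; norm_num)
    refine Continuous.if_le (by fun_prop) ?_ continuous_id continuous_const
      (fun x hx => by subst hx; norm_num)
    refine Continuous.if_le (by fun_prop) ?_ continuous_id continuous_const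
      (fun x hx => by subst hx; norm_num)
    exact Continuous.if_le (by fun_prop) continuous_id continuous_id continuous_const
      (fun x hx => by subst hx; norm_num)
  · intro x hx
    simp only [mapA]
    rcases hx with hx | hx <;> split_ifs <;> first | rfl | linarith
  · intro b hb
    simp only [Finset.mem_insert, Finset.mem_singleton] at hb
    rcases hb with rfl | rfl | rfl | rfl
    · exact ⟨0, 0, by norm_num⟩
    · exact ⟨1, 1, by norm_num⟩
    · exact ⟨3, 2, by norm_num⟩
    · exact ⟨1, 0, by norm_num⟩
  · intro x hx
    simp only [Finset.mem_insert, Finset.mem_singleton] at hx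
    push_neg at hx
    obtain ⟨h0, h12, h34, h1⟩ := hx
    rcases lt_or_gt_of_ne h0 with h | h
    · exact loc_aff 1 0 0 (by norm_num) (by linarith : x - 1 < x) h
        (fun y hy => by obtain ⟨hy1, hy2⟩ := hy; simp only [mapA]; split_ifs <;> linarith)
    rcases lt_or_gt_of_ne h12 with h' | h'
    · exact loc_aff (1/2) 0 (-1) two_zpow_neg_one h h'
        (fun y hy => by obtain ⟨hy1, hy2⟩ := hy; simp only [mapA]; split_ifs <;> linarith)
    rcases lt_or_gt_of_ne h34 with h'' | h''
    · exact loc_aff 1 (-(1/4)) 0 (by norm_num) h' h''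
        (fun y hy => by obtain ⟨hy1, hy2⟩ := hy; simp only [mapA]; split_ifs <;> linarith)
    rcases lt_or_gt_of_ne h1 with h''' | h'''
    · exact loc_aff 2 (-1) 1 (by norm_num) h'' h'''
        (fun y hy => by obtain ⟨hy1, hy2⟩ := hy; simp only [mapA]; split_ifs <;> linarith)
    · exact loc_aff 1 0 0 (by norm_num) h''' (by linarith : x < x + 1)
        (fun y hy => by obtain ⟨hy1, hy2⟩ := hy; simp only [mapA]; split_ifs <;> linarith)

lemma mapA'_thompson : IsThompsonF mapA' := by
  refine ⟨?_, ?_, ?_, ({0, 1/4, 1/2, 1} : Finset ℝ), ?_, ?_⟩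
  · intro a b hab
    simp only [mapA']
    split_ifs <;> linarith
  · unfold mapA'
    refine Continuous.if_le continuous_id ?_ continuous_id continuous_const
      (fun x hx => by subst hx; norm_num)
    refine Continuous.if_le (by fun_prop) ?_ continuous_id continuous_const
      (fun x hx => by subst hx; norm_num)
    refine Continuous.if_le (by fun_prop) ?_ continuous_id continuous_const
      (fun x hx => by subst hx; norm_num)
    exact Continuous.if_le (by fun_prop) continuous_id continuous_id continuous_const
      (fun x hx => by subst hx; norm_num)
  · intro x hx
    simp only [mapA']
    rcases hx with hx | hx <;> split_ifs <;> first | rfl | linarith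
  · intro b hb
    simp only [Finset.mem_insert, Finset.mem_singleton] at hb
    rcases hb with rfl | rfl | rfl | rfl
    · exact ⟨0, 0, by norm_num⟩
    · exact ⟨1, 2, by norm_num⟩
    · exact ⟨1, 1, by norm_num⟩
    · exact ⟨1, 0, by norm_num⟩
  · intro x hx
    simp only [Finset.mem_insert, Finset.mem_singleton] at hx
    push_neg at hx
    obtain ⟨h0, h14, h12, h1⟩ := hx
    rcases lt_or_gt_of_ne h0 with h | h
    · exact loc_aff 1 0 0 (by norm_num) (by linarith : x - 1 < x) h
        (fun y hy => by obtain ⟨hy1, hy2⟩ := hy; simp only [mapA']; split_ifs <;> linarith)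
    rcases lt_or_gt_of_ne h14 with h' | h'
    · exact loc_aff 2 0 1 (by norm_num) h h'
        (fun y hy => by obtain ⟨hy1, hy2⟩ := hy; simp only [mapA']; split_ifs <;> linarith)
    rcases lt_or_gt_of_ne h12 with h'' | h''
    · exact loc_aff 1 (1/4) 0 (by norm_num) h' h''
        (fun y hy => by obtain ⟨hy1, hy2⟩ := hy; simp only [mapA']; split_ifs <;> linarith)
    rcases lt_or_gt_of_ne h1 with h''' | h'''
    · exact loc_aff (1/2) (1/2) (-1) two_zpow_neg_one h'' h'''
        (fun y hy => by obtain ⟨hy1, hy2⟩ := hy; simp only [mapA']; split_ifs <;> linarith)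
    · exact loc_aff 1 0 0 (by norm_num) h''' (by linarith : x < x + 1)
        (fun y hy => by obtain ⟨hy1, hy2⟩ := hy; simp only [mapA']; split_ifs <;> linarith)

lemma mapG_thompson : IsThompsonF mapG := by
  refine ⟨?_, ?_, ?_, ({1/4, 1/2, 1} : Finset ℝ), ?_, ?_⟩
  · intro a b hab
    simp only [mapG]
    split_ifs <;> linarith
  · unfold mapG
    refine Continuous.if_le continuous_id ?_ continuous_id continuous_const
      (fun x hx => by subst hx; norm_num)
    refine Continuous.if_le (by fun_prop) ?_ continuous_id continuous_const
      (fun x hx => by subst hx; norm_num)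
    exact Continuous.if_le (by fun_prop) continuous_id continuous_id continuous_const
      (fun x hx => by subst hx; norm_num)
  · intro x hx
    simp only [mapG]
    rcases hx with hx | hx <;> split_ifs <;> first | rfl | linarith
  · intro b hb
    simp only [Finset.mem_insert, Finset.mem_singleton] at hb
    rcases hb with rfl | rfl | rfl
    · exact ⟨1, 2, by norm_num⟩
    · exact ⟨1, 1, by norm_num⟩
    · exact ⟨1, 0, by norm_num⟩
  · intro x hx
    simp only [Finset.mem_insert, Finset.mem_singleton] at hx
    push_neg at hx
    obtain ⟨h14, h12, h1⟩ := hx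
    rcases lt_or_gt_of_ne h14 with h | h
    · exact loc_aff 1 0 0 (by norm_num) (by linarith : x - 1 < x) h
        (fun y hy => by obtain ⟨hy1, hy2⟩ := hy; simp only [mapG]; split_ifs <;> linarith)
    rcases lt_or_gt_of_ne h12 with h' | h'
    · exact loc_aff 2 (-(1/4)) 1 (by norm_num) h h'
        (fun y hy => by obtain ⟨hy1, hy2⟩ := hy; simp only [mapG]; split_ifs <;> linarith)
    rcases lt_or_gt_of_ne h1 with h'' | h''
    · exact loc_aff (1/2) (1/2) (-1) two_zpow_neg_one h' h''
        (fun y hy => by obtain ⟨hy1, hy2⟩ := hy; simp only [mapG]; split_ifs <;> linarith)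
    · exact loc_aff 1 0 0 (by norm_num) h'' (by linarith : x < x + 1)
        (fun y hy => by obtain ⟨hy1, hy2⟩ := hy; simp only [mapG]; split_ifs <;> linarith)

lemma mapH_thompson : IsThompsonF mapH := by
  refine ⟨?_, ?_, ?_, ({0, 1/2, 3/4} : Finset ℝ), ?_, ?_⟩
  · intro a b hab
    simp only [mapH]
    split_ifs <;> linarith
  · unfold mapH
    refine Continuous.if_le continuous_id ?_ continuous_id continuous_const
      (fun x hx => by subst hx; norm_num)
    refine Continuous.if_le (by fun_prop) ?_ continuous_id continuous_const
      (fun x hx => by subst hx; norm_num)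
    exact Continuous.if_le (by fun_prop) continuous_id continuous_id continuous_const
      (fun x hx => by subst hx; norm_num)
  · intro x hx
    simp only [mapH]
    rcases hx with hx | hx <;> split_ifs <;> first | rfl | linarith
  · intro b hb
    simp only [Finset.mem_insert, Finset.mem_singleton] at hb
    rcases hb with rfl | rfl | rfl
    · exact ⟨0, 0, by norm_num⟩
    · exact ⟨1, 1, by norm_num⟩
    · exact ⟨3, 2, by norm_num⟩
  · intro x hx
    simp only [Finset.mem_insert, Finset.mem_singleton] at hx
    push_neg at hx
    obtain ⟨h0, h12, h34⟩ := hx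
    rcases lt_or_gt_of_ne h0 with h | h
    · exact loc_aff 1 0 0 (by norm_num) (by linarith : x - 1 < x) h
        (fun y hy => by obtain ⟨hy1, hy2⟩ := hy; simp only [mapH]; split_ifs <;> linarith)
    rcases lt_or_gt_of_ne h12 with h' | h'
    · exact loc_aff (1/2) 0 (-1) two_zpow_neg_one h h'
        (fun y hy => by obtain ⟨hy1, hy2⟩ := hy; simp only [mapH]; split_ifs <;> linarith)
    rcases lt_or_gt_of_ne h34 with h'' | h''
    · exact loc_aff 2 (-(3/4)) 1 (by norm_num) h' h''
        (fun y hy => by obtain ⟨hy1, hy2⟩ := hy; simp only [mapH]; split_ifs <;> linarith)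
    · exact loc_aff 1 0 0 (by norm_num) h'' (by linarith : x < x + 1)
        (fun y hy => by obtain ⟨hy1, hy2⟩ := hy; simp only [mapH]; split_ifs <;> linarith)

-- value lemmas
lemma mapA'_val {a : ℝ} (h1 : 0 < a) (h2 : a ≤ 1/4) : mapA' a = 2*a := by
  simp only [mapA']; split_ifs <;> linarith

lemma mapG_val {a : ℝ} (h1 : 1/4 < a) (h2 : a < 1/2) : mapG a = 2*a - 1/4 := by
  simp only [mapG]; split_ifs <;> linarith

lemma mapH_val {a : ℝ} (h1 : 1/2 < a) (h2 : a < 3/4) : mapH a = 2*a - 3/4 := by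
  simp only [mapH]; split_ifs <;> linarith

lemma mapA_val {a : ℝ} (h1 : 3/4 < a) (h2 : a < 1) : mapA a = 2*a - 1 := by
  simp only [mapA]; split_ifs <;> linarith

lemma mapA_val34 : mapA (3/4) = 1/2 := by
  simp only [mapA]; split_ifs <;> linarith

lemma wprod_nil : wprod [] = id := rfl
lemma wprod_cons (g : ℝ → ℝ) (w : List (ℝ → ℝ)) : wprod (g :: w) = g ∘ wprod w := rfl

lemma wprod_append (u v : List (ℝ → ℝ)) : wprod (u ++ v) = wprod u ∘ wprod v := by
  induction u with
  | nil => rfl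
  | cons g u ih => rw [List.cons_append, wprod_cons, wprod_cons, ih]; rfl

lemma dyn_double {a : ℝ} {n : ℕ} (h : DyN a (n+1)) : DyN (2*a) n := by
  obtain ⟨j, rfl⟩ := h
  exact ⟨j, by rw [pow_succ]; field_simp⟩

lemma dyn_quarter : DyN (1/4 : ℝ) 2 := ⟨1, by norm_num⟩
lemma dyn_one' (n : ℕ) : DyN (1 : ℝ) n := ⟨2^n, by push_cast; field_simp⟩

/-- The greedy algorithm: short words over the four basic maps move any dyadic
to `1/2`. -/
lemma steps : ∀ (k : ℕ) (a : ℝ), 0 < a → a < 1 → DyN a k →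
    ∃ l : List (ℝ → ℝ), (∀ g ∈ l, g = mapA ∨ g = mapA' ∨ g = mapG ∨ g = mapH) ∧
      wprod l a = 1/2 ∧ l.length ≤ k := by
  intro k
  induction k with
  | zero =>
    intro a h0 h1 hdyn
    exfalso
    obtain ⟨j, hj⟩ := hdyn
    norm_num at hj
    subst hj
    have hj0 : (0:ℤ) < j := by exact_mod_cast h0
    have hj1 : (j:ℤ) < 1 := by exact_mod_cast h1
    omega
  | succ k ih =>
    intro a h0 h1 hdyn
    by_cases ha : a = 1/2
    · exact ⟨[], by simp, by simp [wprod, ha], by simp⟩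
    have hstep : ∀ b : ℝ, ∀ φ : ℝ → ℝ,
        (φ = mapA ∨ φ = mapA' ∨ φ = mapG ∨ φ = mapH) → φ a = b →
        0 < b → b < 1 → DyN b k →
        ∃ l : List (ℝ → ℝ), (∀ g ∈ l, g = mapA ∨ g = mapA' ∨ g = mapG ∨ g = mapH) ∧
          wprod l a = 1/2 ∧ l.length ≤ k + 1 := by
      intro b φ hφ hval hb0 hb1 hbd
      obtain ⟨l, hl1, hl2, hl3⟩ := ih b hb0 hb1 hbd
      refine ⟨l ++ [φ], ?_, ?_, ?_⟩
      · intro g hg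
        rcases List.mem_append.1 hg with hg | hg
        · exact hl1 g hg
        · simp only [List.mem_singleton] at hg; subst hg; exact hφ
      · rw [wprod_append]
        simp only [Function.comp_apply, wprod_cons, wprod_nil]
        show wprod l (φ (id a)) = 1/2
        rw [id, hval, hl2]
      · simp only [List.length_append, List.length_singleton]; omega
    rcases le_or_gt a (1/4) with hc | hc
    · refine hstep (2*a) mapA' (by tauto) (mapA'_val h0 hc) (by linarith) (by linarith)
        (dyn_double hdyn)
    rcases lt_or_ge a (1/2) with hc2 | hc2
    · -- 1/4 < a < 1/2, use G
      have hk2 : 2 ≤ k := by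
        by_contra hcon
        push_neg at hcon
        interval_cases k
        · obtain ⟨j, hj⟩ := hdyn
          norm_num at hj
          have b1 : (1:ℝ)/2 < (j:ℝ) := by rw [hj] at hc; linarith
          have b2 : (j:ℝ) < 1 := by rw [hj] at hc2; linarith
          have : (0:ℤ) < j := by exact_mod_cast lt_trans (by norm_num : (0:ℝ) < 1/2) b1
          have : (j:ℤ) < 1 := by exact_mod_cast b2
          omega
        · obtain ⟨j, hj⟩ := hdyn
          norm_num at hj
          have b1 : (1:ℝ) < (j:ℝ) := by rw [hj] at hc; linarith
          have b2 : (j:ℝ) < 2 := by rw [hj] at hc2; linarith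
          have : (1:ℤ) < j := by exact_mod_cast b1
          have : (j:ℤ) < 2 := by exact_mod_cast b2
          omega
      refine hstep (2*a - 1/4) mapG (by tauto) (mapG_val hc hc2) (by linarith) (by linarith)
        (dyn_sub (dyn_double hdyn) (dyn_mono dyn_quarter hk2))
    have hc2' : 1/2 < a := lt_of_le_of_ne hc2 (fun h => ha h.symm)
    rcases lt_or_ge a (3/4) with hc3 | hc3
    · -- 1/2 < a < 3/4, use H
      have hk2 : 2 ≤ k := by
        by_contra hcon
        push_neg at hcon
        interval_cases k
        · obtain ⟨j, hj⟩ := hdyn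
          norm_num at hj
          have b1 : (1:ℝ) < (j:ℝ) := by rw [hj] at hc2'; linarith
          have b2 : (j:ℝ) < 2 := by rw [hj] at hc3; linarith
          have : (1:ℤ) < j := by exact_mod_cast b1
          have : (j:ℤ) < 2 := by exact_mod_cast b2
          omega
        · obtain ⟨j, hj⟩ := hdyn
          norm_num at hj
          have b1 : (2:ℝ) < (j:ℝ) := by rw [hj] at hc2'; linarith
          have b2 : (j:ℝ) < 3 := by rw [hj] at hc3; linarith
          have : (2:ℤ) < j := by exact_mod_cast b1
          have : (j:ℤ) < 3 := by exact_mod_cast b2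
          omega
      have hq : DyN (3/4 : ℝ) 2 := ⟨3, by norm_num⟩
      refine hstep (2*a - 3/4) mapH (by tauto) (mapH_val hc2' hc3) (by linarith) (by linarith)
        (dyn_sub (dyn_double hdyn) (dyn_mono hq hk2))
    rcases eq_or_lt_of_le hc3 with ha34 | ha34
    · -- a = 3/4
      refine ⟨[mapA], by simp, ?_, by simp⟩
      show mapA (id a) = 1/2
      rw [id, ← ha34, mapA_val34]
    · refine hstep (2*a - 1) mapA (by tauto) (mapA_val ha34 h1) (by linarith) (by linarith)
        (dyn_sub (dyn_double hdyn) (dyn_one' k))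

/-- fix a finite generating set `S` of Thompson's group `F`. There is
`C > 0` such that for every dyadic `a = d/2^k ∈ (0,1)` with `d` odd, some `f ∈ F`
with `f a = 1/2` has word length `≤ C·k + C`, while every `f ∈ F` with `f a = 1/2`
has word length `≥ k/C - C`. -/
theorem F_move_to_half_word_length (S : Finset (ℝ → ℝ))
    (hS : ∀ g ∈ S, IsThompsonF g)
    (hgen : ∀ f : ℝ → ℝ, IsThompsonF f → ∃ w : List (ℝ → ℝ), WordIn S w ∧ wprod w = f) :
    ∃ C : ℝ, 0 < C ∧
      ∀ (d k : ℕ), Odd d → 0 < (d : ℝ) / 2 ^ k → (d : ℝ) / 2 ^ k < 1 →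
        (∃ (f : ℝ → ℝ) (w : List (ℝ → ℝ)), IsThompsonF f ∧ f ((d : ℝ) / 2 ^ k) = 1 / 2 ∧
          WordIn S w ∧ wprod w = f ∧ (w.length : ℝ) ≤ C * k + C) ∧
        (∀ (f : ℝ → ℝ) (w : List (ℝ → ℝ)), IsThompsonF f → f ((d : ℝ) / 2 ^ k) = 1 / 2 →
          WordIn S w → wprod w = f → (k : ℝ) / C - C ≤ w.length) := by
  classical
  obtain ⟨wA, hwA1, hwA2⟩ := hgen mapA mapA_thompson
  obtain ⟨wA', hwA'1, hwA'2⟩ := hgen mapA' mapA'_thompson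
  obtain ⟨wG, hwG1, hwG2⟩ := hgen mapG mapG_thompson
  obtain ⟨wH, hwH1, hwH2⟩ := hgen mapH mapH_thompson
  set C0 : ℕ := max (max wA.length wA'.length) (max wG.length wH.length) with hC0
  have htrans : ∀ l : List (ℝ → ℝ), (∀ g ∈ l, g = mapA ∨ g = mapA' ∨ g = mapG ∨ g = mapH) →
      ∃ w, WordIn S w ∧ wprod w = wprod l ∧ w.length ≤ C0 * l.length := by
    intro l
    induction l with
    | nil => exact fun _ => ⟨[], fun g hg => absurd hg List.not_mem_nil, rfl, by simp⟩
    | cons g l ih =>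
      intro hl
      obtain ⟨w', hw'1, hw'2, hw'3⟩ := ih (fun x hx => hl x (List.mem_cons_of_mem g hx))
      have hg := hl g List.mem_cons_self
      obtain ⟨wg, hwg1, hwg2, hwg3⟩ : ∃ wg, WordIn S wg ∧ wprod wg = g ∧ wg.length ≤ C0 := by
        rcases hg with rfl | rfl | rfl | rfl
        · exact ⟨wA, hwA1, hwA2, le_trans (le_max_left _ _) (le_max_left _ _)⟩
        · exact ⟨wA', hwA'1, hwA'2, le_trans (le_max_right _ _) (le_max_left _ _)⟩
        · exact ⟨wG, hwG1, hwG2, le_trans (le_max_left _ _) (le_max_right _ _)⟩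
        · exact ⟨wH, hwH1, hwH2, le_trans (le_max_right _ _) (le_max_right _ _)⟩
      refine ⟨wg ++ w', ?_, ?_, ?_⟩
      · intro x hx
        rcases List.mem_append.1 hx with hx | hx
        exacts [hwg1 x hx, hw'1 x hx]
      · rw [wprod_append, hwg2, hw'2, wprod_cons]
      · rw [List.length_append, List.length_cons]
        calc wg.length + w'.length ≤ C0 + C0 * l.length := Nat.add_le_add hwg3 hw'3
        _ = C0 * (l.length + 1) := by ring
  have hTlist : ∀ l : List (ℝ → ℝ), (∀ g ∈ l, g = mapA ∨ g = mapA' ∨ g = mapG ∨ g = mapH) →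
      IsThompsonF (wprod l) := by
    intro l
    induction l with
    | nil => exact fun _ => thompson_id
    | cons g l ih =>
      intro hl
      rw [wprod_cons]
      have hgT : IsThompsonF g := by
        rcases hl g List.mem_cons_self with rfl | rfl | rfl | rfl
        exacts [mapA_thompson, mapA'_thompson, mapG_thompson, mapH_thompson]
      exact thompson_comp hgT (ih (fun x hx => hl x (List.mem_cons_of_mem g hx)))
  have hBOTH : ∀ g : ℝ → ℝ, IsThompsonF g →
      ∃ c : ℕ, ∀ (n : ℕ) (x : ℝ),
        (DyN x n → DyN (g x) (n + c)) ∧ (DyN (g x) n → DyN x (n + c)) := by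
    intro g hg
    obtain ⟨gi, hgiT, hgi1, hgi2⟩ := thompson_inv hg
    obtain ⟨c1, h1⟩ := thompson_dyn_bound hg
    obtain ⟨c2, h2⟩ := thompson_dyn_bound hgiT
    refine ⟨max c1 c2, fun n x => ⟨fun h => dyn_mono (h1 n x h) (by omega), fun h => ?_⟩⟩
    have h3 := h2 n (g x) h
    rw [hgi1 x] at h3
    exact dyn_mono h3 (by omega)
  set cfun : (ℝ → ℝ) → ℕ :=
    fun g => if hg : IsThompsonF g then (hBOTH g hg).choose else 0 with hcfun
  set cS : ℕ := S.sup cfun + 1 with hcS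
  have hletter : ∀ g : ℝ → ℝ, (g ∈ S ∨ ∃ h ∈ S, g ∘ h = id ∧ h ∘ g = id) →
      ∀ (n : ℕ) (x : ℝ), DyN (g x) n → DyN x (n + cS) := by
    intro g hg n x hx
    rcases hg with hgS | ⟨h, hhS, hgh, hhg⟩
    · have hgT := hS g hgS
      have hspec := (hBOTH g hgT).choose_spec n x
      have hle : (hBOTH g hgT).choose ≤ S.sup cfun := by
        have heq : cfun g = (hBOTH g hgT).choose := by
          simp only [hcfun]
          exact dif_pos hgT
        rw [← heq]
        exact Finset.le_sup hgS
      exact dyn_mono (hspec.2 hx) (by omega)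
    · have hhT := hS h hhS
      have hspec := (hBOTH h hhT).choose_spec n (g x)
      have hxx : h (g x) = x := congrFun hhg x
      have h3 := hspec.1 hx
      rw [hxx] at h3
      have hle : (hBOTH h hhT).choose ≤ S.sup cfun := by
        have heq : cfun h = (hBOTH h hhT).choose := by
          simp only [hcfun]
          exact dif_pos hhT
        rw [← heq]
        exact Finset.le_sup hhS
      exact dyn_mono h3 (by omega)
  have hword : ∀ w : List (ℝ → ℝ), WordIn S w → ∀ (n : ℕ) (x : ℝ),
      DyN (wprod w x) n → DyN x (n + cS * w.length) := by
    intro w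
    induction w with
    | nil => intro _ n x h; simpa [wprod] using h
    | cons g w ih =>
      intro hw n x h
      have h' : DyN (g (wprod w x)) n := h
      have h1 : DyN (wprod w x) (n + cS) :=
        hletter g (hw g List.mem_cons_self) n (wprod w x) h'
      have h2 := ih (fun y hy => hw y (List.mem_cons_of_mem g hy)) (n + cS) x h1
      refine dyn_mono h2 ?_
      rw [List.length_cons, Nat.mul_succ]
      omega
  refine ⟨(C0 : ℝ) + (cS : ℝ) + 1, by positivity, fun d k hodd hpos hlt => ?_⟩
  have hdyn : DyN ((d : ℝ) / 2 ^ k) k := ⟨(d : ℤ), by push_cast; ring⟩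
  constructor
  · obtain ⟨l, hl1, hl2, hl3⟩ := steps k ((d : ℝ) / 2 ^ k) hpos hlt hdyn
    obtain ⟨w, hw1, hw2, hw3⟩ := htrans l hl1
    refine ⟨wprod l, w, hTlist l hl1, hl2, hw1, hw2, ?_⟩
    have h1 : w.length ≤ C0 * k := le_trans hw3 (Nat.mul_le_mul_left C0 hl3)
    have h2 : (w.length : ℝ) ≤ (C0 : ℝ) * k := by exact_mod_cast h1
    have hk0 : (0 : ℝ) ≤ k := Nat.cast_nonneg k
    nlinarith [(Nat.cast_nonneg C0 : (0:ℝ) ≤ (C0:ℝ)), (Nat.cast_nonneg cS : (0:ℝ) ≤ (cS:ℝ)),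
      mul_nonneg (Nat.cast_nonneg cS : (0:ℝ) ≤ (cS:ℝ)) hk0]
  · intro f w hfT hf12 hwin hwp
    have hval : wprod w ((d : ℝ) / 2 ^ k) = 1 / 2 := by rw [hwp]; exact hf12
    have hdw : DyN (wprod w ((d : ℝ) / 2 ^ k)) 1 := by
      rw [hval]; exact ⟨1, by norm_num⟩
    have hda : DyN ((d : ℝ) / 2 ^ k) (1 + cS * w.length) :=
      hword w hwin 1 ((d : ℝ) / 2 ^ k) hdw
    have hk : k ≤ 1 + cS * w.length := le_of_dyn_odd hodd hda
    have hkR : (k : ℝ) ≤ 1 + (cS : ℝ) * w.length := by exact_mod_cast hk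
    have hC0pos : (0 : ℝ) < (C0 : ℝ) + (cS : ℝ) + 1 := by positivity
    have hcsC : (cS : ℝ) ≤ (C0 : ℝ) + (cS : ℝ) + 1 := by
      have : (0 : ℝ) ≤ (C0 : ℝ) := Nat.cast_nonneg C0
      linarith
    have h1C : (1 : ℝ) ≤ (C0 : ℝ) + (cS : ℝ) + 1 := by
      have h1 : (0 : ℝ) ≤ (C0 : ℝ) := Nat.cast_nonneg C0
      have h2 : (0 : ℝ) ≤ (cS : ℝ) := Nat.cast_nonneg cS
      linarith
    have hL0 : (0 : ℝ) ≤ (w.length : ℝ) := Nat.cast_nonneg _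
    rw [sub_le_iff_le_add, div_le_iff₀ hC0pos]
    nlinarith [mul_le_mul_of_nonneg_right hcsC hL0]
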